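/- arXiv:2507.19235 — 3 statements merged into one kernel-verified Lean document; each statement's English description precedes it below -/
import Mathlib

section
/- Let G=(V,p,μ) be a weighted graph with bounded geometry with constant α>0 satisfying CD(0,n) for some positive integer n. Let u₀∈L^∞(V,μ) with ‖Γu₀‖_∞ < α/2 and let u:[0,∞)→L^∞(V,μ) be the solution of the modified heat equation with initial data u₀. Then for all t>0 and all x∈V, Γ(u(t))(x) − u'(t)(x) = −Δ(u(t))(x) ≤ n/(2t). -/
/-- A weighted graph `G = (V, p, μ)`: a nonnegative kernel `p` and a positive
measure `μ` on the vertex set `V`, such that `G` is locally finite, `p` is a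
Markov kernel, and `G` is connected.  Vertices `x, y` are neighbours (`x ∼ y`)
iff `0 < p x y`. -/
structure WeightedGraph (V : Type*) where
  p : V → V → ℝ
  μ : V → ℝ
  p_nonneg : ∀ x y, 0 ≤ p x y
  μ_pos : ∀ x, 0 < μ x
  locallyFinite : ∀ x, {y | 0 < p x y}.Finite
  markov : ∀ x, HasSum (p x) 1
  connected : ∀ x y : V, ∃ n : ℕ, ∃ c : Fin (n + 1) → V,
      c 0 = x ∧ c (Fin.last n) = y ∧ ∀ i : Fin n, 0 < p (c i.castSucc) (c i.succ)

namespace WeightedGraph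

variable {V : Type*} (G : WeightedGraph V)

/-- The Laplacian `Δ f (x) = ∑_{y ∼ x} p x y * (f y - f x)`.  (Summing over all
of `V` is the same, since `p x y = 0` unless `y ∼ x`.) -/
noncomputable def lap (f : V → ℝ) (x : V) : ℝ := ∑' y, G.p x y * (f y - f x)

/-- The carré du champ `Γ f (x) = (1/2) ∑_{y ∼ x} p x y * (f y - f x)^2`. -/
noncomputable def gamma (f : V → ℝ) (x : V) : ℝ := (1 / 2) * ∑' y, G.p x y * (f y - f x) ^ 2

/-- The bilinear carré du champ
`Γ(f,g)(x) = (1/2) ∑_{y ∼ x} p x y * (f y - f x) * (g y - g x)`. -/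
noncomputable def gammaBil (f g : V → ℝ) (x : V) : ℝ :=
  (1 / 2) * ∑' y, G.p x y * (f y - f x) * (g y - g x)

/-- The iterated carré du champ `Γ₂ f = (1/2) Δ (Γ f) - Γ(f, Δ f)`. -/
noncomputable def gamma2 (f : V → ℝ) (x : V) : ℝ :=
  (1 / 2) * G.lap (G.gamma f) x - G.gammaBil f (G.lap f) x

/-- Bounded geometry with constant `α > 0`: the uniform ellipticity condition (A1)
`p x y ≥ α` whenever `x ∼ y`, and the reversibility condition (A2)
`p x y * μ x = p y x * μ y`. -/
def BoundedGeometry (α : ℝ) : Prop :=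
  0 < α ∧ (∀ x y, 0 < G.p x y → α ≤ G.p x y) ∧ ∀ x y, G.p x y * G.μ x = G.p y x * G.μ y

/-- The Bakry–Émery curvature-dimension condition `CD(K, n)`:
`Γ₂ f ≥ (1/n) (Δ f)² + K Γ f`. -/
def CD (K : ℝ) (n : ℕ) : Prop :=
  ∀ f : V → ℝ, ∀ x : V, (1 / (n : ℝ)) * G.lap f x ^ 2 + K * G.gamma f x ≤ G.gamma2 f x

/-- The Bakry–Émery curvature-dimension condition `CD(K, ∞)`: `Γ₂ f ≥ K Γ f`. -/
def CDInfty (K : ℝ) : Prop :=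
  ∀ f : V → ℝ, ∀ x : V, K * G.gamma f x ≤ G.gamma2 f x

/-- The graph distance `d(x,y)`: the least length of a path of consecutive
neighbours joining `x` to `y` (and `0` if `x = y`). -/
noncomputable def dist (x y : V) : ℕ :=
  sInf {n : ℕ | ∃ c : Fin (n + 1) → V,
    c 0 = x ∧ c (Fin.last n) = y ∧ ∀ i : Fin n, 0 < G.p (c i.castSucc) (c i.succ)}

/-- The measure `μ(B(x,r)) = ∑_{y : d(x,y) ≤ r} μ y` of the closed ball `B(x,r)`. -/
noncomputable def ballMeasure (x : V) (r : ℝ) : ℝ :=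
  ∑' y : {y : V // (G.dist x y : ℝ) ≤ r}, G.μ y

end WeightedGraph

/-- The sup norm `‖f‖_∞ = sup_x |f x|` of a (bounded) function on `V`. -/
noncomputable def supNorm {V : Type*} (f : V → ℝ) : ℝ := ⨆ x, |f x|

/-- The space `L^∞(V, μ)` of bounded functions on `V`, with the sup norm
`‖f‖_∞ = sup_x |f x|`. -/
noncomputable abbrev Linf (V : Type*) := lp (fun _ : V => ℝ) ⊤

/-- `u : [0,∞) → L^∞(V,μ)` is a solution of the modified heat equation
`∂ₜ u = Δ u + Γ u` with initial data `u₀` and derivative `u'`: `u` is continuous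
on `[0,∞)`, differentiable on `(0,∞)` with derivative `u'` continuous there,
`u 0 = u₀`, and `u' t = Δ (u t) + Γ (u t)` for all `t > 0`. -/
structure IsMHESolution {V : Type*} (G : WeightedGraph V) (u u' : ℝ → Linf V)
    (u₀ : Linf V) : Prop where
  init : u 0 = u₀
  cont : ContinuousOn u (Set.Ici 0)
  derivCont : ContinuousOn u' (Set.Ioi 0)
  hasDeriv : ∀ t > (0 : ℝ), HasDerivAt u (u' t) t
  eqn : ∀ t > (0 : ℝ), ∀ x : V, u' t x = G.lap (fun y => u t y) x + G.gamma (fun y => u t y) x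


namespace WeightedGraph
variable {V : Type*} (G : WeightedGraph V)

-- infrastructure
lemma summable_p (x : V) : Summable (G.p x) := (G.markov x).summable

lemma tsum_p (x : V) : ∑' y, G.p x y = 1 := (G.markov x).tsum_eq

lemma summable_mul_of_bdd {g : V → ℝ} (x : V) {c : ℝ} (hg : ∀ y, |g y| ≤ c) :
    Summable (fun y => G.p x y * g y) := by
  rw [← summable_abs_iff]
  apply Summable.of_nonneg_of_le (fun y => abs_nonneg _) (fun y => ?_)
    (((G.summable_p x).mul_left c))
  rw [abs_mul, abs_of_nonneg (G.p_nonneg x _)]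
  calc G.p x y * |g y| ≤ G.p x y * c := by
        exact mul_le_mul_of_nonneg_left (hg y) (G.p_nonneg x _)
    _ = c * G.p x y := mul_comm _ _

lemma tsum_p_mul_le {g : V → ℝ} (x : V) {c : ℝ} (hc : 0 ≤ c) (hg : ∀ y, |g y| ≤ c) :
    |∑' y, G.p x y * g y| ≤ c := by
  have hs : Summable (fun y => G.p x y * g y) := G.summable_mul_of_bdd x hg
  have h1 : ‖∑' y, G.p x y * g y‖ ≤ ∑' y, ‖G.p x y * g y‖ := norm_tsum_le_tsum_norm hs.abs
  have h2 : ∑' y, |G.p x y * g y| ≤ ∑' y, c * G.p x y := by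
    refine Summable.tsum_le_tsum (fun y => ?_) hs.abs ((G.summable_p x).mul_left c)
    rw [abs_mul, abs_of_nonneg (G.p_nonneg x _), mul_comm]
    exact mul_le_mul_of_nonneg_right (hg y) (G.p_nonneg x _)
  have h3 : ∑' y, c * G.p x y = c := by rw [tsum_mul_left, G.tsum_p, mul_one]
  simp only [Real.norm_eq_abs] at h1
  calc |∑' y, G.p x y * g y| ≤ ∑' y, |G.p x y * g y| := h1
    _ ≤ ∑' y, c * G.p x y := h2
    _ = c := h3

lemma abs_lap_le {f : V → ℝ} {c : ℝ} (hf : ∀ y, |f y| ≤ c) (x : V) :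
    |G.lap f x| ≤ 2 * c := by
  have hc : 0 ≤ c := le_trans (abs_nonneg _) (hf x)
  refine G.tsum_p_mul_le x (by positivity) (fun y => ?_)
  calc |f y - f x| ≤ |f y| + |f x| := abs_sub _ _
    _ ≤ 2 * c := by have := hf y; have := hf x; linarith

lemma summable_lap {f : V → ℝ} {c : ℝ} (hf : ∀ y, |f y| ≤ c) (x : V) :
    Summable (fun y => G.p x y * (f y - f x)) := by
  refine G.summable_mul_of_bdd x (g := fun y => f y - f x) (c := 2 * c) (fun y => ?_)
  calc |f y - f x| ≤ |f y| + |f x| := abs_sub _ _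
    _ ≤ 2 * c := by have := hf y; have := hf x; linarith

lemma summable_gamma {f : V → ℝ} {c : ℝ} (hf : ∀ y, |f y| ≤ c) (x : V) :
    Summable (fun y => G.p x y * (f y - f x) ^ 2) := by
  refine G.summable_mul_of_bdd x (g := fun y => (f y - f x) ^ 2) (c := (2 * c) ^ 2) (fun y => ?_)
  rw [abs_of_nonneg (sq_nonneg _)]
  have h1 : |f y - f x| ≤ 2 * c := by
    calc |f y - f x| ≤ |f y| + |f x| := abs_sub _ _
      _ ≤ 2 * c := by have := hf y; have := hf x; linarith
  calc (f y - f x) ^ 2 = |f y - f x| ^ 2 := (sq_abs _).symm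
    _ ≤ (2 * c) ^ 2 := by apply pow_le_pow_left₀ (abs_nonneg _) h1

lemma summable_gammaBil {f g : V → ℝ} {c d : ℝ} (hf : ∀ y, |f y| ≤ c) (hg : ∀ y, |g y| ≤ d)
    (x : V) : Summable (fun y => G.p x y * (f y - f x) * (g y - g x)) := by
  have : ∀ y, G.p x y * (f y - f x) * (g y - g x) = G.p x y * ((f y - f x) * (g y - g x)) :=
    fun y => by ring
  simp_rw [this]
  refine G.summable_mul_of_bdd x (c := (2 * c) * (2 * d)) (fun y => ?_)
  rw [abs_mul]
  have h1 : |f y - f x| ≤ 2 * c := by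
    calc |f y - f x| ≤ |f y| + |f x| := abs_sub _ _
      _ ≤ 2 * c := by have := hf y; have := hf x; linarith
  have h2 : |g y - g x| ≤ 2 * d := by
    calc |g y - g x| ≤ |g y| + |g x| := abs_sub _ _
      _ ≤ 2 * d := by have := hg y; have := hg x; linarith
  have hc : 0 ≤ c := le_trans (abs_nonneg _) (hf x)
  exact mul_le_mul h1 h2 (abs_nonneg _) (by linarith)

lemma gamma_nonneg {f : V → ℝ} (x : V) : 0 ≤ G.gamma f x := by
  unfold gamma
  have : 0 ≤ ∑' y, G.p x y * (f y - f x) ^ 2 :=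
    tsum_nonneg (fun y => mul_nonneg (G.p_nonneg x y) (sq_nonneg _))
  linarith

lemma abs_gamma_le {f : V → ℝ} {c : ℝ} (hf : ∀ y, |f y| ≤ c) (x : V) :
    |G.gamma f x| ≤ 2 * c ^ 2 := by
  have hc : 0 ≤ c := le_trans (abs_nonneg _) (hf x)
  unfold gamma
  rw [abs_mul]
  have h := G.tsum_p_mul_le x (c := (2*c)^2) (sq_nonneg _)
    (g := fun y => (f y - f x) ^ 2) (fun y => ?_)
  · rw [abs_of_nonneg (by norm_num : (0:ℝ) ≤ 1/2)]
    calc (1/2) * |∑' y, G.p x y * (f y - f x) ^ 2| ≤ (1/2) * (2*c)^2 := by linarith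
      _ = 2 * c ^ 2 := by ring
  · rw [abs_of_nonneg (sq_nonneg _)]
    have h1 : |f y - f x| ≤ 2 * c := by
      calc |f y - f x| ≤ |f y| + |f x| := abs_sub _ _
        _ ≤ 2 * c := by have := hf y; have := hf x; linarith
    calc (f y - f x) ^ 2 = |f y - f x| ^ 2 := (sq_abs _).symm
      _ ≤ (2 * c) ^ 2 := by apply pow_le_pow_left₀ (abs_nonneg _) h1

lemma abs_gammaBil_le {f g : V → ℝ} {c d : ℝ} (hf : ∀ y, |f y| ≤ c) (hg : ∀ y, |g y| ≤ d)
    (x : V) : |G.gammaBil f g x| ≤ 2 * c * d := by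
  have hc : 0 ≤ c := le_trans (abs_nonneg _) (hf x)
  have hd : 0 ≤ d := le_trans (abs_nonneg _) (hg x)
  unfold gammaBil
  rw [abs_mul, abs_of_nonneg (by norm_num : (0:ℝ) ≤ 1/2)]
  have h := G.tsum_p_mul_le x (c := (2*c)*(2*d)) (by positivity)
    (g := fun y => (f y - f x) * (g y - g x)) (fun y => ?_)
  · have h2 : |∑' y, G.p x y * ((f y - f x) * (g y - g x))| ≤ 2*c*(2*d) := by
      calc |∑' y, G.p x y * ((f y - f x) * (g y - g x))| ≤ (2*c)*(2*d) := h
        _ = 2*c*(2*d) := by ring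
    have heq : ∀ y, G.p x y * (f y - f x) * (g y - g x)
        = G.p x y * ((f y - f x) * (g y - g x)) := fun y => by ring
    simp_rw [heq]
    calc (1/2) * |∑' y, G.p x y * ((f y - f x) * (g y - g x))| ≤ (1/2)*(2*c*(2*d)) := by linarith
      _ = 2 * c * d := by ring
  · rw [abs_mul]
    have h1 : |f y - f x| ≤ 2 * c := by
      calc |f y - f x| ≤ |f y| + |f x| := abs_sub _ _
        _ ≤ 2 * c := by have := hf y; have := hf x; linarith
    have h2 : |g y - g x| ≤ 2 * d := by
      calc |g y - g x| ≤ |g y| + |g x| := abs_sub _ _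
        _ ≤ 2 * d := by have := hg y; have := hg x; linarith
    exact mul_le_mul h1 h2 (abs_nonneg _) (by positivity)


lemma lap_lincomb {f g h : V → ℝ} {cf cg ch : ℝ} (hf : ∀ y, |f y| ≤ cf)
    (hg : ∀ y, |g y| ≤ cg) (hh : ∀ y, |h y| ≤ ch) (c : ℝ) (x : V) :
    G.lap (fun y => f y - g y - c * h y) x = G.lap f x - G.lap g x - c * G.lap h x := by
  unfold lap
  have hA := G.summable_lap hf x
  have hB := G.summable_lap hg x
  have hC := G.summable_lap hh x
  have key : ∀ y : V, G.p x y * ((f y - g y - c * h y) - (f x - g x - c * h x))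
      = G.p x y * (f y - f x) - G.p x y * (g y - g x) - c * (G.p x y * (h y - h x)) :=
    fun y => by ring
  rw [show (fun y => G.p x y * ((fun y => f y - g y - c * h y) y
      - (fun y => f y - g y - c * h y) x))
      = fun y => G.p x y * (f y - f x) - G.p x y * (g y - g x)
        - c * (G.p x y * (h y - h x)) from funext key]
  rw [Summable.tsum_sub (hA.sub hB) (hC.mul_left c), Summable.tsum_sub hA hB, tsum_mul_left]

lemma lap_add {f g : V → ℝ} {cf cg : ℝ} (hf : ∀ y, |f y| ≤ cf)
    (hg : ∀ y, |g y| ≤ cg) (x : V) :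
    G.lap (fun y => f y + g y) x = G.lap f x + G.lap g x := by
  unfold lap
  have hA := G.summable_lap hf x
  have hB := G.summable_lap hg x
  rw [show (fun y => G.p x y * ((fun y => f y + g y) y - (fun y => f y + g y) x))
      = fun y => G.p x y * (f y - f x) + G.p x y * (g y - g x) from funext fun y => by ring]
  exact Summable.tsum_add hA hB

lemma lap_neg (f : V → ℝ) (x : V) : G.lap (fun y => -(f y)) x = -G.lap f x := by
  unfold lap
  rw [show (fun y => G.p x y * ((fun y => -(f y)) y - (fun y => -(f y)) x))
      = fun y => -(G.p x y * (f y - f x)) from funext fun y => by ring]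
  rw [tsum_neg]

lemma gammaBil_add₂ {φ f g : V → ℝ} {cφ cf cg : ℝ} (hφ : ∀ y, |φ y| ≤ cφ)
    (hf : ∀ y, |f y| ≤ cf) (hg : ∀ y, |g y| ≤ cg) (x : V) :
    G.gammaBil φ (fun y => f y + g y) x = G.gammaBil φ f x + G.gammaBil φ g x := by
  unfold gammaBil
  have hA := G.summable_gammaBil hφ hf x
  have hB := G.summable_gammaBil hφ hg x
  rw [show (fun y => G.p x y * (φ y - φ x) * ((fun y => f y + g y) y - (fun y => f y + g y) x))
      = fun y => G.p x y * (φ y - φ x) * (f y - f x) + G.p x y * (φ y - φ x) * (g y - g x)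
      from funext fun y => by ring]
  rw [Summable.tsum_add hA hB]; ring

lemma gammaBil_neg₂ (φ f : V → ℝ) (x : V) :
    G.gammaBil φ (fun y => -(f y)) x = -G.gammaBil φ f x := by
  unfold gammaBil
  rw [show (fun y => G.p x y * (φ y - φ x) * ((fun y => -(f y)) y - (fun y => -(f y)) x))
      = fun y => -(G.p x y * (φ y - φ x) * (f y - f x)) from funext fun y => by ring]
  rw [tsum_neg]; ring

lemma gammaBil_lincomb₂ {φ f g h : V → ℝ} {cφ cf cg ch : ℝ} (hφ : ∀ y, |φ y| ≤ cφ)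
    (hf : ∀ y, |f y| ≤ cf) (hg : ∀ y, |g y| ≤ cg) (hh : ∀ y, |h y| ≤ ch) (c : ℝ) (x : V) :
    G.gammaBil φ (fun y => f y - g y - c * h y) x
      = G.gammaBil φ f x - G.gammaBil φ g x - c * G.gammaBil φ h x := by
  unfold gammaBil
  have hA := G.summable_gammaBil hφ hf x
  have hB := G.summable_gammaBil hφ hg x
  have hC := G.summable_gammaBil hφ hh x
  rw [show (fun y => G.p x y * (φ y - φ x) * ((fun y => f y - g y - c * h y) y
      - (fun y => f y - g y - c * h y) x))
      = fun y => G.p x y * (φ y - φ x) * (f y - f x) - G.p x y * (φ y - φ x) * (g y - g x)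
        - c * (G.p x y * (φ y - φ x) * (h y - h x)) from funext fun y => by simp only; ring]
  rw [Summable.tsum_sub (hA.sub hB) (hC.mul_left c), Summable.tsum_sub hA hB, tsum_mul_left]
  ring

lemma gamma_expand {f g : V → ℝ} {cf cg : ℝ} (hf : ∀ y, |f y| ≤ cf)
    (hg : ∀ y, |g y| ≤ cg) (x : V) :
    G.gamma f x = G.gamma g x + 2 * G.gammaBil g (fun y => f y - g y) x
      + G.gamma (fun y => f y - g y) x := by
  have hd : ∀ y, |f y - g y| ≤ cf + cg := fun y => by
    calc |f y - g y| ≤ |f y| + |g y| := abs_sub _ _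
      _ ≤ cf + cg := add_le_add (hf y) (hg y)
  unfold gamma gammaBil
  have hA := G.summable_gamma hg x
  have hB := G.summable_gammaBil hg hd x
  have hC := G.summable_gamma hd x
  have key : (fun y => G.p x y * (f y - f x) ^ 2)
      = fun y => (G.p x y * (g y - g x) ^ 2
        + G.p x y * (g y - g x) * ((fun y => f y - g y) y - (fun y => f y - g y) x))
        + (G.p x y * (g y - g x) * ((fun y => f y - g y) y - (fun y => f y - g y) x)
          + G.p x y * ((fun y => f y - g y) y - (fun y => f y - g y) x) ^ 2) := by
    funext y; simp only; ring
  rw [key, Summable.tsum_add (hA.add hB) (hB.add hC), Summable.tsum_add hA hB, Summable.tsum_add hB hC]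
  ring

lemma lap_gamma_eq (f : V → ℝ) (x : V) :
    G.lap (G.gamma f) x = 2 * G.gamma2 f x + 2 * G.gammaBil f (G.lap f) x := by
  unfold gamma2; ring

lemma lap_add_two_gammaBil {φ g : V → ℝ} {cφ cg : ℝ} (hφ : ∀ y, |φ y| ≤ cφ)
    (hg : ∀ y, |g y| ≤ cg) (x : V) :
    G.lap g x + 2 * G.gammaBil φ g x
      = ∑' y, G.p x y * ((g y - g x) * (1 + (φ y - φ x))) := by
  unfold lap gammaBil
  have hA := G.summable_lap hg x
  have hB := G.summable_gammaBil hφ hg x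
  have key : (fun y => G.p x y * ((g y - g x) * (1 + (φ y - φ x))))
      = fun y => G.p x y * (g y - g x) + G.p x y * (φ y - φ x) * (g y - g x) := by
    funext y; ring
  rw [key, Summable.tsum_add hA ?_]
  · ring
  · exact G.summable_gammaBil hφ hg x

lemma nearmax_tsum_le {φ g : V → ℝ} {cφ cg ε : ℝ} (hφb : ∀ y, |φ y| ≤ cφ)
    (hgb : ∀ y, |g y| ≤ cg) (x : V) (hε : 0 ≤ ε)
    (hφ : ∀ y, 0 < G.p x y → |φ y - φ x| ≤ 1) (hg : ∀ y, g y ≤ g x + ε) :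
    ∑' y, G.p x y * ((g y - g x) * (1 + (φ y - φ x))) ≤ 2 * ε := by
  have hsum : Summable (fun y => G.p x y * ((g y - g x) * (1 + (φ y - φ x)))) := by
    refine G.summable_mul_of_bdd x (c := (2 * cg) * (1 + 2 * cφ)) (fun y => ?_)
    rw [abs_mul]
    have h1 : |g y - g x| ≤ 2 * cg := by
      calc |g y - g x| ≤ |g y| + |g x| := abs_sub _ _
        _ ≤ 2 * cg := by have := hgb y; have := hgb x; linarith
    have h2 : |1 + (φ y - φ x)| ≤ 1 + 2 * cφ := by
      have h3 : |φ y - φ x| ≤ 2 * cφ := by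
        calc |φ y - φ x| ≤ |φ y| + |φ x| := abs_sub _ _
          _ ≤ 2 * cφ := by have := hφb y; have := hφb x; linarith
      calc |1 + (φ y - φ x)| ≤ |(1:ℝ)| + |φ y - φ x| := abs_add_le _ _
        _ ≤ 1 + 2 * cφ := by rw [abs_one]; linarith
    exact mul_le_mul h1 h2 (abs_nonneg _) (by
      have := le_trans (abs_nonneg _) h1; linarith [abs_nonneg (g y - g x)])
  have hterm : ∀ y, G.p x y * ((g y - g x) * (1 + (φ y - φ x))) ≤ 2 * ε * G.p x y := by
    intro y
    rcases eq_or_lt_of_le (G.p_nonneg x y) with hp | hp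
    · rw [← hp]; simp
    · have hosc := hφ y hp
      have hfac0 : 0 ≤ 1 + (φ y - φ x) := by
        have := abs_le.1 hosc; linarith [this.1]
      have hfac2 : 1 + (φ y - φ x) ≤ 2 := by
        have := abs_le.1 hosc; linarith [this.2]
      have hgle : g y - g x ≤ ε := by linarith [hg y]
      rcases le_or_gt (g y - g x) 0 with hgn | hgp
      · have : (g y - g x) * (1 + (φ y - φ x)) ≤ 0 := mul_nonpos_of_nonpos_of_nonneg hgn hfac0
        calc G.p x y * ((g y - g x) * (1 + (φ y - φ x))) ≤ 0 :=
              mul_nonpos_of_nonneg_of_nonpos (le_of_lt hp) this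
          _ ≤ 2 * ε * G.p x y := by positivity
      · have : (g y - g x) * (1 + (φ y - φ x)) ≤ ε * 2 :=
          mul_le_mul hgle hfac2 (by linarith [abs_nonneg (1 + (φ y - φ x))]) hε
        calc G.p x y * ((g y - g x) * (1 + (φ y - φ x))) ≤ G.p x y * (ε * 2) :=
              mul_le_mul_of_nonneg_left this (le_of_lt hp)
          _ = 2 * ε * G.p x y := by ring
  calc ∑' y, G.p x y * ((g y - g x) * (1 + (φ y - φ x)))
      ≤ ∑' y, 2 * ε * G.p x y := Summable.tsum_le_tsum hterm hsum ((G.summable_p x).mul_left _)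
    _ = 2 * ε := by rw [tsum_mul_left, G.tsum_p, mul_one]

lemma osc_le_one {φ : V → ℝ} {cφ α : ℝ} (hφb : ∀ y, |φ y| ≤ cφ) (hα : 0 < α)
    (hbg : ∀ x y, 0 < G.p x y → α ≤ G.p x y) {x : V}
    (hγ : G.gamma φ x ≤ α / 2) : ∀ y, 0 < G.p x y → |φ y - φ x| ≤ 1 := by
  intro y hp
  have hterm : G.p x y * (φ y - φ x) ^ 2 ≤ ∑' z, G.p x z * (φ z - φ x) ^ 2 :=
    Summable.le_tsum (G.summable_gamma hφb x) y
      (fun z _ => mul_nonneg (G.p_nonneg x z) (sq_nonneg _))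
  have h2 : ∑' z, G.p x z * (φ z - φ x) ^ 2 = 2 * G.gamma φ x := by unfold gamma; ring
  have h3 : G.p x y * (φ y - φ x) ^ 2 ≤ α := by
    rw [h2] at hterm; linarith
  have h4 : α * (φ y - φ x) ^ 2 ≤ α * 1 := by
    calc α * (φ y - φ x) ^ 2 ≤ G.p x y * (φ y - φ x) ^ 2 :=
          mul_le_mul_of_nonneg_right (hbg x y hp) (sq_nonneg _)
      _ ≤ α := h3
      _ = α * 1 := (mul_one α).symm
  have h5 : (φ y - φ x) ^ 2 ≤ 1 := le_of_mul_le_mul_left h4 hα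
  exact abs_le_one_iff_mul_self_le_one.2 (by nlinarith [sq_abs (φ y - φ x)])


end WeightedGraph

open Filter Topology Set

lemma slope_master {V : Type*} [Nonempty V] {g : ℝ → V → ℝ} {gd : V → ℝ} {t L r Cd : ℝ}
    (hCd : ∀ x, |gd x| ≤ Cd)
    (hexp : ∀ η > (0:ℝ), ∀ᶠ z in 𝓝[>] t, ∀ x, |g z x - g t x - (z - t) * gd x| ≤ η * (z - t))
    (hbdd : ∀ z, BddAbove (Set.range (g z)))
    (hkey : ∀ s, L < s → ∃ ε > (0:ℝ), ∀ x, (∀ y, g t y ≤ g t x + ε) → gd x ≤ s)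
    (hr : L < r) :
    ∀ᶠ z in 𝓝[>] t, ((⨆ x, g z x) - ⨆ x, g t x) / (z - t) < r := by
  have hCd0 : 0 ≤ Cd := le_trans (abs_nonneg _) (hCd (Classical.arbitrary V))
  set s : ℝ := (L + r) / 2 with hs
  obtain ⟨ε, hε, key⟩ := hkey s (by rw [hs]; linarith)
  set η : ℝ := min ((r - s) / 4) 1 with hη
  have hη0 : 0 < η := by
    apply lt_min _ one_pos
    rw [hs]; linarith
  have hη1 : 2 * η ≤ (r - s) / 2 := by
    have := min_le_left ((r - s) / 4) 1
    rw [hη]; linarith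
  set θ : ℝ := ε / (2 * Cd + 3 * η + 1) with hθ
  have hden : 0 < 2 * Cd + 3 * η + 1 := by linarith
  have hθ0 : 0 < θ := div_pos hε hden
  filter_upwards [hexp η hη0, Ioo_mem_nhdsGT_of_mem (show t ∈ Ico t (t + θ) by
    constructor <;> simp [hθ0, le_refl])] with z hz1 hz2
  set δ : ℝ := z - t with hδdef
  have hδ0 : 0 < δ := by simp only [hδdef]; linarith [hz2.1]
  have hδθ : δ < θ := by simp only [hδdef]; linarith [hz2.2]
  set mt : ℝ := ⨆ x, g t x with hmt
  set mz : ℝ := ⨆ x, g z x with hmz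
  -- upper and lower pointwise bounds
  have h_up : ∀ x, g z x ≤ g t x + δ * gd x + η * δ := by
    intro x
    have := (abs_le.1 (hz1 x)).2
    linarith
  have h_dn : ∀ x, g t x ≤ g z x + δ * Cd + η * δ := by
    intro x
    have h1 := (abs_le.1 (hz1 x)).1
    have h2 : δ * (-gd x) ≤ δ * Cd :=
      mul_le_mul_of_nonneg_left (le_trans (neg_le_abs _) (hCd x)) (le_of_lt hδ0)
    nlinarith
  have hmt_le : mt ≤ mz + δ * Cd + η * δ := by
    rw [hmt]
    apply ciSup_le
    intro x
    have := le_ciSup (hbdd z) x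
    have h2 := h_dn x
    rw [← hmz] at this
    linarith
  obtain ⟨x₀, hx₀⟩ : ∃ x₀, mz - η * δ < g z x₀ := by
    apply exists_lt_of_lt_ciSup
    have : 0 < η * δ := mul_pos hη0 hδ0
    rw [hmz]; linarith
  have hgtx₀ : mt - δ * (2 * Cd) - 3 * (η * δ) ≤ g t x₀ := by
    have h1 := (abs_le.1 (hz1 x₀)).2
    have h2 : δ * gd x₀ ≤ δ * Cd :=
      mul_le_mul_of_nonneg_left (le_trans (le_abs_self _) (hCd x₀)) (le_of_lt hδ0)
    linarith
  have hnear : ∀ y, g t y ≤ g t x₀ + ε := by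
    intro y
    have h1 : g t y ≤ mt := le_ciSup (hbdd t) y
    have h2 : δ * (2 * Cd + 3 * η) ≤ ε := by
      have h3 : δ * (2 * Cd + 3 * η) ≤ θ * (2 * Cd + 3 * η) :=
        mul_le_mul_of_nonneg_right (le_of_lt hδθ) (by linarith)
      have h4 : θ * (2 * Cd + 3 * η) ≤ ε := by
        rw [hθ, div_mul_eq_mul_div, div_le_iff₀ hden]
        nlinarith
      linarith
    nlinarith [hgtx₀]
  have hgd : gd x₀ ≤ s := key x₀ hnear
  have hmz_le : mz ≤ mt + δ * s + 2 * (η * δ) := by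
    have h1 := h_up x₀
    have h2 : g t x₀ ≤ mt := le_ciSup (hbdd t) x₀
    have h3 : δ * gd x₀ ≤ δ * s := mul_le_mul_of_nonneg_left hgd (le_of_lt hδ0)
    linarith
  rw [div_lt_iff₀ hδ0]
  have hfin : δ * s + 2 * (η * δ) < r * δ := by nlinarith
  linarith

namespace WeightedGraph
variable {V : Type*} (G : WeightedGraph V)

lemma coe_bdd (v : Linf V) : ∀ y, |v y| ≤ ‖v‖ := fun y => by
  have h := lp.norm_apply_le_norm (E := fun _ : V => ℝ) ENNReal.top_ne_zero v y
  rwa [Real.norm_eq_abs] at h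

lemma bdd_of_le {f : V → ℝ} {c : ℝ} (h : ∀ x, f x ≤ c) : BddAbove (Set.range f) :=
  ⟨c, by rintro _ ⟨x, rfl⟩; exact h x⟩

lemma ciSup_abs_sub_le [Nonempty V] {f g : V → ℝ} {cf cg c : ℝ}
    (hf : ∀ x, f x ≤ cf) (hg : ∀ x, g x ≤ cg)
    (h : ∀ x, |f x - g x| ≤ c) : |(⨆ x, f x) - ⨆ x, g x| ≤ c := by
  rw [abs_sub_le_iff]
  constructor
  · have : (⨆ x, f x) ≤ (⨆ x, g x) + c := by
      apply ciSup_le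
      intro x
      have h1 := (abs_le.1 (h x)).2
      have h2 := le_ciSup (bdd_of_le hg) x
      linarith
    linarith
  · have : (⨆ x, g x) ≤ (⨆ x, f x) + c := by
      apply ciSup_le
      intro x
      have h1 := (abs_le.1 (h x)).1
      have h2 := le_ciSup (bdd_of_le hf) x
      linarith
    linarith

lemma lap_sub {f g : V → ℝ} {cf cg : ℝ} (hf : ∀ y, |f y| ≤ cf)
    (hg : ∀ y, |g y| ≤ cg) (x : V) :
    G.lap (fun y => f y - g y) x = G.lap f x - G.lap g x := by
  unfold WeightedGraph.lap
  have hA := G.summable_lap hf x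
  have hB := G.summable_lap hg x
  rw [show (fun y => G.p x y * ((fun y => f y - g y) y - (fun y => f y - g y) x))
      = fun y => G.p x y * (f y - f x) - G.p x y * (g y - g x) from funext fun y => by ring]
  exact Summable.tsum_sub hA hB

/-- The sup of `-Δ v` as a function of `v ∈ L^∞`. -/
noncomputable def Wsup [Nonempty V] (v : Linf V) : ℝ := ⨆ x, -G.lap (fun y => v y) x

/-- The sup of `Γ v` as a function of `v ∈ L^∞`. -/
noncomputable def Gsup [Nonempty V] (v : Linf V) : ℝ := ⨆ x, G.gamma (fun y => v y) x

lemma coe_sub_bdd (v w : Linf V) : ∀ y, |v y - w y| ≤ ‖v - w‖ := by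
  intro y
  have hc : (v - w) y = v y - w y := by rw [lp.coeFn_sub]; rfl
  rw [← hc]
  exact coe_bdd _ y

lemma Wsup_diff_le [Nonempty V] (v w : Linf V) :
    |G.Wsup v - G.Wsup w| ≤ 2 * ‖v - w‖ := by
  unfold Wsup
  have key : ∀ x, |(-G.lap (fun y => v y) x) - (-G.lap (fun y => w y) x)| ≤ 2 * ‖v - w‖ := by
    intro x
    have h1 : G.lap (fun y => v y - w y) x = G.lap (fun y => v y) x - G.lap (fun y => w y) x :=
      G.lap_sub (f := fun y => v y) (g := fun y => w y) (coe_bdd v) (coe_bdd w) x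
    have h2 := G.abs_lap_le (coe_sub_bdd v w) x
    rw [h1] at h2
    have heq : (-G.lap (fun y => v y) x) - (-G.lap (fun y => w y) x)
        = -(G.lap (fun y => v y) x - G.lap (fun y => w y) x) := by ring
    rw [heq, abs_neg]
    exact h2
  have hbv : ∀ x, -G.lap (fun y => v y) x ≤ 2 * ‖v‖ := fun x => by
    have := (abs_le.1 (G.abs_lap_le (coe_bdd v) x)).1; linarith
  have hbw : ∀ x, -G.lap (fun y => w y) x ≤ 2 * ‖w‖ := fun x => by
    have := (abs_le.1 (G.abs_lap_le (coe_bdd w) x)).1; linarith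
  exact ciSup_abs_sub_le hbv hbw key

lemma Gsup_diff_le [Nonempty V] (v w : Linf V) :
    |G.Gsup v - G.Gsup w| ≤ 4 * ‖w‖ * ‖v - w‖ + 2 * ‖v - w‖ ^ 2 := by
  unfold Gsup
  have hd := coe_sub_bdd v w
  have key : ∀ x, |G.gamma (fun y => v y) x - G.gamma (fun y => w y) x|
      ≤ 4 * ‖w‖ * ‖v - w‖ + 2 * ‖v - w‖ ^ 2 := by
    intro x
    have hexp := G.gamma_expand (f := fun y => v y) (g := fun y => w y)
      (coe_bdd v) (coe_bdd w) x
    have h1 := G.abs_gammaBil_le (f := fun y => w y) (g := fun y => v y - w y)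
      (coe_bdd w) hd x
    have h2 := G.abs_gamma_le (f := fun y => v y - w y) hd x
    rw [hexp]
    set P := G.gammaBil (fun y => w y) (fun y => v y - w y) x with hP
    set Q := G.gamma (fun y => v y - w y) x with hQ
    have heq : G.gamma (fun y => w y) x + 2 * P + Q - G.gamma (fun y => w y) x
        = 2 * P + Q := by ring
    rw [heq]
    have habs : |2 * P + Q| ≤ 2 * |P| + |Q| := by
      calc |2 * P + Q| ≤ |2 * P| + |Q| := abs_add_le _ _
        _ = 2 * |P| + |Q| := by rw [abs_mul, abs_two]
    linarith
  have hbv : ∀ x, G.gamma (fun y => v y) x ≤ 2 * ‖v‖ ^ 2 := fun x => by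
    have := (abs_le.1 (G.abs_gamma_le (coe_bdd v) x)).2; linarith
  have hbw : ∀ x, G.gamma (fun y => w y) x ≤ 2 * ‖w‖ ^ 2 := fun x => by
    have := (abs_le.1 (G.abs_gamma_le (coe_bdd w) x)).2; linarith
  exact ciSup_abs_sub_le hbv hbw key

lemma Wsup_continuous [Nonempty V] : Continuous (G.Wsup : Linf V → ℝ) := by
  rw [Metric.continuous_iff]
  intro w ε hε
  refine ⟨ε / 3, by linarith, fun v hv => ?_⟩
  rw [Real.dist_eq]
  have hdist : ‖v - w‖ < ε / 3 := by rwa [← dist_eq_norm]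
  have h3 := G.Wsup_diff_le v w
  calc |G.Wsup v - G.Wsup w| ≤ 2 * ‖v - w‖ := h3
    _ < ε := by linarith

lemma Gsup_continuous [Nonempty V] : Continuous (G.Gsup : Linf V → ℝ) := by
  rw [Metric.continuous_iff]
  intro w ε hε
  refine ⟨min 1 (ε / (4 * ‖w‖ + 3)), lt_min one_pos (div_pos hε (by linarith [norm_nonneg w])), fun v hv => ?_⟩
  rw [Real.dist_eq]
  have hdist : ‖v - w‖ < min 1 (ε / (4 * ‖w‖ + 3)) := by rwa [← dist_eq_norm]
  have h1 : ‖v - w‖ < 1 := lt_of_lt_of_le hdist (min_le_left _ _)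
  have h2 : ‖v - w‖ < ε / (4 * ‖w‖ + 3) := lt_of_lt_of_le hdist (min_le_right _ _)
  have h3 := G.Gsup_diff_le v w
  have hn : (0:ℝ) ≤ ‖v - w‖ := norm_nonneg _
  have hw : (0:ℝ) ≤ ‖w‖ := norm_nonneg _
  have h4 : ‖v - w‖ ^ 2 ≤ ‖v - w‖ := by nlinarith
  have h6 : (4 * ‖w‖ + 3) * (ε / (4 * ‖w‖ + 3)) = ε := by
    rw [mul_comm]; exact div_mul_cancel₀ ε (by linarith)
  have h5 : (4 * ‖w‖ + 2) * ‖v - w‖ < ε := by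
    rcases eq_or_lt_of_le hn with h | h
    · rw [← h, mul_zero]; exact hε
    · calc (4 * ‖w‖ + 2) * ‖v - w‖ < (4 * ‖w‖ + 3) * (ε / (4 * ‖w‖ + 3)) :=
          mul_lt_mul' (by linarith) h2 hn (by linarith)
        _ = ε := h6
  calc |G.Gsup v - G.Gsup w| ≤ 4 * ‖w‖ * ‖v - w‖ + 2 * ‖v - w‖ ^ 2 := h3
    _ ≤ (4 * ‖w‖ + 2) * ‖v - w‖ := by nlinarith
    _ < ε := h5

end WeightedGraph

namespace WeightedGraph

open Filter Topology Set Asymptotics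

variable {V : Type*} [Nonempty V] (G : WeightedGraph V) {α : ℝ} {n : ℕ}
  {u₀ : Linf V} {u u' : ℝ → Linf V}

lemma gammaBil_sub₂ {φ f g : V → ℝ} {cφ cf cg : ℝ} (hφ : ∀ y, |φ y| ≤ cφ)
    (hf : ∀ y, |f y| ≤ cf) (hg : ∀ y, |g y| ≤ cg) (x : V) :
    G.gammaBil φ (fun y => f y - g y) x = G.gammaBil φ f x - G.gammaBil φ g x := by
  unfold gammaBil
  have hA := G.summable_gammaBil hφ hf x
  have hB := G.summable_gammaBil hφ hg x
  rw [show (fun y => G.p x y * (φ y - φ x) * ((fun y => f y - g y) y - (fun y => f y - g y) x))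
      = fun y => G.p x y * (φ y - φ x) * (f y - f x) - G.p x y * (φ y - φ x) * (g y - g x)
      from funext fun y => by simp only; ring]
  rw [Summable.tsum_sub hA hB]; ring

lemma W_exp (hu : IsMHESolution G u u' u₀) {τ : ℝ} (hτ : 0 < τ) {η : ℝ} (hη : 0 < η) :
    ∀ᶠ z in 𝓝[>] τ, ∀ x : V,
      |(-G.lap (fun y => u z y) x) - (-G.lap (fun y => u τ y) x)
        - (z - τ) * (-G.lap (fun y => u' τ y) x)| ≤ η * (z - τ) := by
  have hd := hu.hasDeriv τ hτ
  rw [hasDerivAt_iff_isLittleO] at hd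
  have h2 := isLittleO_iff.mp hd (show (0:ℝ) < η/2 by linarith)
  filter_upwards [nhdsWithin_le_nhds h2, self_mem_nhdsWithin] with z hz hz2
  have hzτ : (0:ℝ) < z - τ := sub_pos.2 hz2
  intro x
  have hrb : ∀ y, |u z y - u τ y - (z - τ) * u' τ y| ≤ ‖u z - u τ - (z - τ) • u' τ‖ := by
    intro y
    have h1 : (u z - u τ - (z - τ) • u' τ) y = u z y - u τ y - (z - τ) * u' τ y := by
      rw [lp.coeFn_sub, lp.coeFn_sub, lp.coeFn_smul]; rfl
    rw [← h1]
    exact coe_bdd _ y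
  have hlin := G.lap_lincomb (f := fun y => u z y) (g := fun y => u τ y)
    (h := fun y => u' τ y) (coe_bdd (u z)) (coe_bdd (u τ)) (coe_bdd (u' τ)) (z - τ) x
  have hlap := G.abs_lap_le (f := fun y => u z y - u τ y - (z - τ) * u' τ y) hrb x
  rw [hlin] at hlap
  have heq : (-G.lap (fun y => u z y) x) - (-G.lap (fun y => u τ y) x)
      - (z - τ) * (-G.lap (fun y => u' τ y) x)
      = -(G.lap (fun y => u z y) x - G.lap (fun y => u τ y) x
        - (z - τ) * G.lap (fun y => u' τ y) x) := by ring
  rw [heq, abs_neg]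
  have hnz : ‖u z - u τ - (z - τ) • u' τ‖ ≤ η/2 * (z - τ) := by
    have h3 : ‖z - τ‖ = z - τ := by rw [Real.norm_eq_abs, abs_of_pos hzτ]
    calc ‖u z - u τ - (z - τ) • u' τ‖ ≤ η/2 * ‖z - τ‖ := hz
      _ = η/2 * (z - τ) := by rw [h3]
  calc |G.lap (fun y => u z y) x - G.lap (fun y => u τ y) x
        - (z - τ) * G.lap (fun y => u' τ y) x|
      ≤ 2 * ‖u z - u τ - (z - τ) • u' τ‖ := hlap
    _ ≤ 2 * (η/2 * (z - τ)) := by linarith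
    _ = η * (z - τ) := by ring

set_option maxHeartbeats 1000000 in
lemma gamma_exp (hu : IsMHESolution G u u' u₀) {τ : ℝ} (hτ : 0 < τ) {η : ℝ} (hη : 0 < η) :
    ∀ᶠ z in 𝓝[>] τ, ∀ x : V,
      |G.gamma (fun y => u z y) x - G.gamma (fun y => u τ y) x
        - (z - τ) * (2 * G.gammaBil (fun y => u τ y) (fun y => u' τ y) x)| ≤ η * (z - τ) := by
  set A : ℝ := ‖u τ‖ with hA
  set B : ℝ := ‖u' τ‖ with hB
  have hA0 : 0 ≤ A := norm_nonneg _
  have hB0 : 0 ≤ B := norm_nonneg _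
  set η' : ℝ := min 1 (η/(8*(A+1))) with hη'
  have hη'0 : 0 < η' := lt_min one_pos (by positivity)
  have hη'1 : η' ≤ 1 := min_le_left _ _
  have hη'2 : η' ≤ η/(8*(A+1)) := min_le_right _ _
  have hd := hu.hasDeriv τ hτ
  rw [hasDerivAt_iff_isLittleO] at hd
  have h2 := isLittleO_iff.mp hd hη'0
  have hIoo : Ioo τ (τ + η/(4*(1+B)^2)) ∈ 𝓝[>] τ :=
    Ioo_mem_nhdsGT_of_mem ⟨le_refl _, by
      have : (0:ℝ) < η/(4*(1+B)^2) := by positivity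
      linarith⟩
  filter_upwards [nhdsWithin_le_nhds h2, hIoo] with z hz hz3
  have hzτ : (0:ℝ) < z - τ := sub_pos.2 hz3.1
  have hzsm : z - τ < η/(4*(1+B)^2) := by linarith [hz3.2]
  intro x
  -- the remainder
  have hrb : ∀ y, |u z y - u τ y - (z - τ) * u' τ y| ≤ η' * (z - τ) := by
    intro y
    have h1 : (u z - u τ - (z - τ) • u' τ) y = u z y - u τ y - (z - τ) * u' τ y := by
      rw [lp.coeFn_sub, lp.coeFn_sub, lp.coeFn_smul]; rfl
    have h4 : ‖z - τ‖ = z - τ := by rw [Real.norm_eq_abs, abs_of_pos hzτ]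
    calc |u z y - u τ y - (z - τ) * u' τ y| = |(u z - u τ - (z - τ) • u' τ) y| := by rw [h1]
      _ ≤ ‖u z - u τ - (z - τ) • u' τ‖ := coe_bdd _ y
      _ ≤ η' * ‖z - τ‖ := hz
      _ = η' * (z - τ) := by rw [h4]
  have hdb : ∀ y, |u z y - u τ y| ≤ (η' + B) * (z - τ) := by
    intro y
    have h5 := hrb y
    have h6 : |(z - τ) * u' τ y| ≤ (z - τ) * B := by
      rw [abs_mul, abs_of_pos hzτ]
      exact mul_le_mul_of_nonneg_left (coe_bdd (u' τ) y) (le_of_lt hzτ)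
    calc |u z y - u τ y|
        = |(u z y - u τ y - (z - τ) * u' τ y) + (z - τ) * u' τ y| := by ring_nf
      _ ≤ |u z y - u τ y - (z - τ) * u' τ y| + |(z - τ) * u' τ y| := abs_add_le _ _
      _ ≤ η' * (z - τ) + (z - τ) * B := add_le_add h5 h6
      _ = (η' + B) * (z - τ) := by ring
  -- expansion
  have hexp := G.gamma_expand (f := fun y => u z y) (g := fun y => u τ y)
    (coe_bdd (u z)) (coe_bdd (u τ)) x
  have hsub := G.gammaBil_sub₂ (φ := fun y => u τ y) (f := fun y => u z y)
    (g := fun y => u τ y) (coe_bdd (u τ)) (coe_bdd (u z)) (coe_bdd (u τ)) x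
  have hlin := G.gammaBil_lincomb₂ (φ := fun y => u τ y) (f := fun y => u z y)
    (g := fun y => u τ y) (h := fun y => u' τ y) (coe_bdd (u τ)) (coe_bdd (u z))
    (coe_bdd (u τ)) (coe_bdd (u' τ)) (z - τ) x
  have hbρ := G.abs_gammaBil_le (f := fun y => u τ y)
    (g := fun y => u z y - u τ y - (z - τ) * u' τ y) (coe_bdd (u τ)) hrb x
  have hbγ := G.abs_gamma_le (f := fun y => u z y - u τ y) hdb x
  have hkey : G.gamma (fun y => u z y) x - G.gamma (fun y => u τ y) x
      - (z - τ) * (2 * G.gammaBil (fun y => u τ y) (fun y => u' τ y) x)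
      = 2 * G.gammaBil (fun y => u τ y) (fun y => u z y - u τ y - (z - τ) * u' τ y) x
        + G.gamma (fun y => u z y - u τ y) x := by
    rw [hexp, hlin, hsub]; ring
  rw [hkey]
  have hb1 : |2 * G.gammaBil (fun y => u τ y)
      (fun y => u z y - u τ y - (z - τ) * u' τ y) x| ≤ 4 * A * (η' * (z - τ)) := by
    rw [abs_mul, abs_two]
    have := hbρ
    calc (2:ℝ) * |G.gammaBil (fun y => u τ y)
          (fun y => u z y - u τ y - (z - τ) * u' τ y) x|
        ≤ 2 * (2 * A * (η' * (z - τ))) := by linarith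
      _ = 4 * A * (η' * (z - τ)) := by ring
  have hfin : 4 * A * (η' * (z - τ)) + 2 * ((η' + B) * (z - τ)) ^ 2 ≤ η * (z - τ) := by
    have e1 : 4 * A * η' ≤ η / 2 := by
      have : 4 * A * η' ≤ 4 * A * (η/(8*(A+1))) :=
        mul_le_mul_of_nonneg_left hη'2 (by linarith)
      have e2 : 4 * A * (η/(8*(A+1))) ≤ η / 2 := by
        rw [← mul_div_assoc, div_le_div_iff₀ (by linarith : (0:ℝ) < 8*(A+1)) (by norm_num : (0:ℝ) < 2)]
        nlinarith [hη.le]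
      linarith
    have e3 : 2 * ((η' + B) * (z - τ)) ^ 2 ≤ 2 * ((1 + B) ^ 2 * (z - τ)) * (z - τ) := by
      have : ((η' + B) * (z - τ)) ^ 2 = (η' + B)^2 * (z - τ)^2 := by ring
      rw [this]
      have h7 : (η' + B)^2 ≤ (1 + B)^2 := by nlinarith
      nlinarith [sq_nonneg (z - τ)]
    have e4 : 2 * ((1 + B) ^ 2 * (z - τ)) ≤ η / 2 := by
      have h8 : (0:ℝ) < (1 + B)^2 := by positivity
      have h9 := hzsm
      rw [lt_div_iff₀ (by positivity : (0:ℝ) < 4*(1+B)^2)] at h9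
      nlinarith
    have f1 : 4*A*(η'*(z-τ)) ≤ η/2*(z-τ) := by
      have h10 := mul_le_mul_of_nonneg_right e1 hzτ.le
      calc 4*A*(η'*(z-τ)) = 4*A*η'*(z-τ) := by ring
        _ ≤ η/2*(z-τ) := h10
    have f2 : 2 * ((1 + B) ^ 2 * (z - τ))*(z-τ) ≤ η/2*(z-τ) :=
      mul_le_mul_of_nonneg_right e4 hzτ.le
    linarith
  calc |2 * G.gammaBil (fun y => u τ y) (fun y => u z y - u τ y - (z - τ) * u' τ y) x
        + G.gamma (fun y => u z y - u τ y) x|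
      ≤ |2 * G.gammaBil (fun y => u τ y) (fun y => u z y - u τ y - (z - τ) * u' τ y) x|
        + |G.gamma (fun y => u z y - u τ y) x| := abs_add_le _ _
    _ ≤ 4 * A * (η' * (z - τ)) + 2 * ((η' + B) * (z - τ)) ^ 2 := by linarith
    _ ≤ η * (z - τ) := hfin

end WeightedGraph

namespace WeightedGraph

open Filter Topology Set Asymptotics

variable {V : Type*} [Nonempty V] (G : WeightedGraph V) {α : ℝ} {n : ℕ}
  {u₀ : Linf V} {u u' : ℝ → Linf V}

lemma gamma_deriv_nearmax (hu : IsMHESolution G u u' u₀) (hbg : G.BoundedGeometry α)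
    (hCD : G.CD 0 n) {τ : ℝ} (hτ : 0 < τ)
    (hMg : ∀ x : V, G.gamma (fun y => u τ y) x ≤ α / 2)
    {ε : ℝ} (hε : 0 ≤ ε) {x : V}
    (hnear : ∀ y : V, G.gamma (fun y' => u τ y') y ≤ G.gamma (fun y' => u τ y') x + ε) :
    2 * G.gammaBil (fun y => u τ y) (fun y => u' τ y) x ≤ 2 * ε := by
  have bl : ∀ y, |G.lap (fun y' => u τ y') y| ≤ 2 * ‖u τ‖ :=
    fun y => G.abs_lap_le (coe_bdd (u τ)) y
  have bgam : ∀ y, |G.gamma (fun y' => u τ y') y| ≤ 2 * ‖u τ‖ ^ 2 :=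
    fun y => G.abs_gamma_le (coe_bdd (u τ)) y
  have hcoe : (fun y => (u' τ) y)
      = fun y => G.lap (fun y' => u τ y') y + G.gamma (fun y' => u τ y') y :=
    funext (hu.eqn τ hτ)
  rw [hcoe]
  have hadd := G.gammaBil_add₂ (φ := fun y => u τ y) (f := fun y => G.lap (fun y' => u τ y') y)
    (g := fun y => G.gamma (fun y' => u τ y') y) (coe_bdd (u τ)) bl bgam x
  rw [hadd]
  have hγ2 := hCD (fun y => u τ y) x
  have hγ2' : 0 ≤ G.gamma2 (fun y => u τ y) x := by
    have h1 : 0 ≤ (1 / (n : ℝ)) * G.lap (fun y => u τ y) x ^ 2 := by positivity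
    have h2 : (0:ℝ) * G.gamma (fun y => u τ y) x = 0 := by ring
    linarith [hγ2, h2.le]
  have hlg := G.lap_gamma_eq (fun y => u τ y) x
  -- 2 * Γbil(u, lap u) = lap (γ u) - 2 γ₂
  have key : 2 * (G.gammaBil (fun y => u τ y) (fun y'' => G.lap (fun y' => u τ y') y'') x
        + G.gammaBil (fun y => u τ y) (fun y'' => G.gamma (fun y' => u τ y') y'') x)
      ≤ G.lap (G.gamma fun y => u τ y) x
        + 2 * G.gammaBil (fun y => u τ y) (G.gamma fun y => u τ y) x := by
    have e1 : G.gammaBil (fun y => u τ y) (fun y'' => G.lap (fun y' => u τ y') y'') x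
        = G.gammaBil (fun y => u τ y) (G.lap fun y => u τ y) x := rfl
    have e2 : G.gammaBil (fun y => u τ y) (fun y'' => G.gamma (fun y' => u τ y') y'') x
        = G.gammaBil (fun y => u τ y) (G.gamma fun y => u τ y) x := rfl
    rw [e1, e2]
    linarith [hlg, hγ2']
  have keyeq : (2 : ℝ) * (G.gammaBil (fun y => u τ y) (fun y'' => G.lap (fun y' => u τ y') y'') x
        + G.gammaBil (fun y => u τ y) (fun y'' => G.gamma (fun y' => u τ y') y'') x)
      = 2 * G.gammaBil (fun y => u τ y) (fun y => G.lap (fun y' => u τ y') y) x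
        + 2 * G.gammaBil (fun y => u τ y) (fun y => G.gamma (fun y' => u τ y') y) x := by
    ring
  have htsum := G.lap_add_two_gammaBil (φ := fun y => u τ y) (g := G.gamma fun y => u τ y)
    (coe_bdd (u τ)) bgam x
  have hosc := G.osc_le_one (coe_bdd (u τ)) hbg.1 hbg.2.1 (hMg x)
  have hbound := G.nearmax_tsum_le (φ := fun y => u τ y) (g := G.gamma fun y => u τ y)
    (coe_bdd (u τ)) bgam x hε hosc hnear
  linarith [keyeq ▸ key, htsum ▸ hbound]

lemma W_deriv_nearmax (hu : IsMHESolution G u u' u₀) (hbg : G.BoundedGeometry α)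
    (hCD : G.CD 0 n) (hn : 0 < n) {τ : ℝ} (hτ : 0 < τ)
    (hMg : ∀ x : V, G.gamma (fun y => u τ y) x ≤ α / 2)
    {ε : ℝ} (hε : 0 ≤ ε) {x : V}
    (hnear : ∀ y : V, -G.lap (fun y' => u τ y') y ≤ -G.lap (fun y' => u τ y') x + ε) :
    -G.lap (fun y => u' τ y) x
      ≤ 2 * ε - (2 / (n:ℝ)) * (G.lap (fun y => u τ y) x) ^ 2 := by
  have bl : ∀ y, |G.lap (fun y' => u τ y') y| ≤ 2 * ‖u τ‖ :=
    fun y => G.abs_lap_le (coe_bdd (u τ)) y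
  have bgam : ∀ y, |G.gamma (fun y' => u τ y') y| ≤ 2 * ‖u τ‖ ^ 2 :=
    fun y => G.abs_gamma_le (coe_bdd (u τ)) y
  have bW : ∀ y, |(fun y' => -G.lap (fun y'' => u τ y'') y') y| ≤ 2 * ‖u τ‖ := by
    intro y
    simp only [abs_neg]
    exact bl y
  have hcoe : (fun y => (u' τ) y)
      = fun y => G.lap (fun y' => u τ y') y + G.gamma (fun y' => u τ y') y :=
    funext (hu.eqn τ hτ)
  rw [hcoe]
  have hadd := G.lap_add (f := fun y => G.lap (fun y' => u τ y') y)
    (g := fun y => G.gamma (fun y' => u τ y') y) bl bgam x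
  rw [hadd]
  -- lap of W
  have hneg := G.lap_neg (fun y => G.lap (fun y' => u τ y') y) x
  -- gammaBil sign flip
  have hflip := G.gammaBil_neg₂ (fun y => u τ y) (fun y => G.lap (fun y' => u τ y') y) x
  have hlg := G.lap_gamma_eq (fun y => u τ y) x
  have hγ2 := hCD (fun y => u τ y) x
  have hγ2' : (1 / (n : ℝ)) * G.lap (fun y => u τ y) x ^ 2
      ≤ G.gamma2 (fun y => u τ y) x := by
    have h2 : (0:ℝ) * G.gamma (fun y => u τ y) x = 0 := by ring
    linarith [hγ2]
  have htsum := G.lap_add_two_gammaBil (φ := fun y => u τ y)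
    (g := fun y => -G.lap (fun y' => u τ y') y) (coe_bdd (u τ)) bW x
  have hosc := G.osc_le_one (coe_bdd (u τ)) hbg.1 hbg.2.1 (hMg x)
  have hbound := G.nearmax_tsum_le (φ := fun y => u τ y)
    (g := fun y => -G.lap (fun y' => u τ y') y) (coe_bdd (u τ)) bW x hε hosc hnear
  -- identify lap of (-lap u) and gammaBil with the neg versions
  have e1 : G.lap (fun y => -G.lap (fun y' => u τ y') y) x
      = -G.lap (fun y => G.lap (fun y' => u τ y') y) x := hneg
  have e2 : G.gammaBil (fun y => u τ y) (fun y => -G.lap (fun y' => u τ y') y) x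
      = -G.gammaBil (fun y => u τ y) (fun y => G.lap (fun y' => u τ y') y) x := hflip
  have e3 : G.gammaBil (fun y => u τ y) (fun y => G.lap (fun y' => u τ y') y) x
      = G.gammaBil (fun y => u τ y) (G.lap fun y => u τ y) x := rfl
  have e4 : G.lap (fun y => G.gamma (fun y' => u τ y') y) x
      = G.lap (G.gamma fun y => u τ y) x := rfl
  have hchain : -(G.lap (fun y => G.lap (fun y' => u τ y') y) x
        + G.lap (fun y => G.gamma (fun y' => u τ y') y) x)
      ≤ 2 * ε - 2 * ((1 / (n:ℝ)) * G.lap (fun y => u τ y) x ^ 2) := by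
    have h5 : G.lap (fun y => -G.lap (fun y' => u τ y') y) x
        + 2 * G.gammaBil (fun y => u τ y) (fun y => -G.lap (fun y' => u τ y') y) x
        ≤ 2 * ε := htsum ▸ hbound
    rw [e1, e2, e3] at h5
    rw [e4]
    have h6 : G.lap (G.gamma fun y => u τ y) x
        = 2 * G.gamma2 (fun y => u τ y) x
          + 2 * G.gammaBil (fun y => u τ y) (G.lap fun y => u τ y) x := hlg
    linarith [hγ2']
  have hend : 2 * ((1 / (n:ℝ)) * G.lap (fun y => u τ y) x ^ 2)
      = (2 / (n:ℝ)) * (G.lap (fun y => u τ y) x) ^ 2 := by ring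
  linarith [hchain, hend.le, hend.ge]

end WeightedGraph

namespace WeightedGraph

open Filter Topology Set Asymptotics

variable {V : Type*} [Nonempty V] (G : WeightedGraph V) {α : ℝ} {n : ℕ}
  {u₀ : Linf V} {u u' : ℝ → Linf V}

lemma gamma_bddAbove (v : Linf V) :
    BddAbove (Set.range (fun x : V => G.gamma (fun y => v y) x)) :=
  bdd_of_le (fun x => (le_abs_self _).trans (G.abs_gamma_le (coe_bdd v) x))

lemma gamma_le_Gsup (v : Linf V) (x : V) : G.gamma (fun y => v y) x ≤ G.Gsup v :=
  le_ciSup (G.gamma_bddAbove v) x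

lemma gamma_propagation (hu : IsMHESolution G u u' u₀) (hbg : G.BoundedGeometry α)
    (hCD : G.CD 0 n) (ha : G.Gsup (u 0) < α / 2) :
    ∀ t : ℝ, 0 ≤ t → ∀ x : V, G.gamma (fun y => u t y) x ≤ α / 2 := by
  intro t ht
  set a : ℝ := G.Gsup (u 0) with hadef
  set c' : ℝ := (a + α/2)/2 with hc'
  have hac' : a < c' := by rw [hc']; linarith
  have hc'α : c' < α/2 := by rw [hc']; linarith
  have Fcont : ContinuousOn (fun τ => G.Gsup (u τ)) (Ici 0) :=
    (G.Gsup_continuous).comp_continuousOn hu.cont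
  have hF0 : ContinuousWithinAt (fun τ => G.Gsup (u τ)) (Ici 0) 0 :=
    Fcont 0 self_mem_Ici
  have hev : (fun τ => G.Gsup (u τ)) ⁻¹' (Iio c') ∈ 𝓝[Ici 0] (0:ℝ) :=
    hF0 (Iio_mem_nhds hac')
  obtain ⟨ε, hε, hball⟩ := Metric.mem_nhdsWithin_iff.1 hev
  set s0 : ℝ := ε/2 with hs0def
  have hs0pos : 0 < s0 := by rw [hs0def]; linarith
  have hsmall : ∀ τ : ℝ, 0 ≤ τ → τ ≤ s0 → G.Gsup (u τ) < c' := by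
    intro τ h1 h2
    have hmem : τ ∈ Metric.ball (0:ℝ) ε ∩ Ici 0 := by
      constructor
      · rw [Metric.mem_ball, Real.dist_eq, sub_zero, abs_of_nonneg h1]
        rw [hs0def] at h2; linarith
      · exact h1
    exact hball hmem
  rcases le_or_gt t s0 with hts | hts
  · intro x
    have h1 := hsmall t ht hts
    have h2 := G.gamma_le_Gsup (u t) x
    linarith
  · -- comparison on [s0, t]
    have hs0t : s0 ≤ t := le_of_lt hts
    set δ₀ : ℝ := (α/2 - c') * Real.exp (-t) with hδ₀
    have hδ₀pos : 0 < δ₀ := mul_pos (by linarith) (Real.exp_pos _)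
    have main : ∀ δ : ℝ, 0 < δ → δ ≤ δ₀ → G.Gsup (u t) ≤ c' + δ * Real.exp t := by
      intro δ hδ hδle
      have hres := image_le_of_liminf_slope_right_lt_deriv_boundary
        (f := fun τ => G.Gsup (u τ))
        (f' := fun τ => if G.Gsup (u τ) ≤ α/2 then (0:ℝ) else 4*‖u τ‖*‖u' τ‖ + 1)
        (a := s0) (b := t)
        (B := fun τ => c' + δ * Real.exp τ) (B' := fun τ => δ * Real.exp τ)
        (Fcont.mono (fun τ hτ => le_trans hs0pos.le hτ.1))
        ?_ (by
          show G.Gsup (u s0) ≤ c' + δ * Real.exp s0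
          have h1 := hsmall s0 hs0pos.le le_rfl
          have h2 : 0 < δ * Real.exp s0 := mul_pos hδ (Real.exp_pos _)
          linarith)
        (fun τ => ((Real.hasDerivAt_exp τ).const_mul δ).const_add c')
        ?_
      · exact hres (right_mem_Icc.2 hs0t)
      · -- hf' : slope bound
        intro τ hτ r hr0
        have hr : (if G.Gsup (u τ) ≤ α/2 then (0:ℝ) else 4*‖u τ‖*‖u' τ‖ + 1) < r := hr0
        have hτ0 : 0 < τ := lt_of_lt_of_le hs0pos hτ.1
        by_cases hcase : G.Gsup (u τ) ≤ α/2
        · rw [if_pos hcase] at hr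
          have hMg : ∀ x : V, G.gamma (fun y => u τ y) x ≤ α/2 :=
            fun x => (G.gamma_le_Gsup (u τ) x).trans hcase
          have hmaster := slope_master
            (g := fun z x => G.gamma (fun y => u z y) x)
            (gd := fun x => 2 * G.gammaBil (fun y => u τ y) (fun y => u' τ y) x)
            (t := τ) (L := 0) (r := r) (Cd := 4*‖u τ‖*‖u' τ‖)
            (fun x => by
              rw [abs_mul, abs_two]
              have := G.abs_gammaBil_le (f := fun y => u τ y) (g := fun y => u' τ y)
                (coe_bdd (u τ)) (coe_bdd (u' τ)) x
              linarith)
            (fun η hη => G.gamma_exp hu hτ0 hη)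
            (fun z => G.gamma_bddAbove (u z))
            (fun s hs => ⟨s/2, by linarith, fun x hnear => by
              show 2 * G.gammaBil (fun y => u τ y) (fun y => u' τ y) x ≤ s
              have := G.gamma_deriv_nearmax hu hbg hCD hτ0 hMg
                (by linarith : (0:ℝ) ≤ s/2) hnear
              linarith⟩)
            hr
          refine (hmaster.mono (fun z hz => ?_)).frequently
          rw [slope_def_field]
          exact hz
        · rw [if_neg hcase] at hr
          have hmaster := slope_master
            (g := fun z x => G.gamma (fun y => u z y) x)
            (gd := fun x => 2 * G.gammaBil (fun y => u τ y) (fun y => u' τ y) x)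
            (t := τ) (L := 4*‖u τ‖*‖u' τ‖ + 1) (r := r) (Cd := 4*‖u τ‖*‖u' τ‖)
            (fun x => by
              rw [abs_mul, abs_two]
              have := G.abs_gammaBil_le (f := fun y => u τ y) (g := fun y => u' τ y)
                (coe_bdd (u τ)) (coe_bdd (u' τ)) x
              linarith)
            (fun η hη => G.gamma_exp hu hτ0 hη)
            (fun z => G.gamma_bddAbove (u z))
            (fun s hs => ⟨1, one_pos, fun x _ => by
              show 2 * G.gammaBil (fun y => u τ y) (fun y => u' τ y) x ≤ s
              have h1 : |2 * G.gammaBil (fun y => u τ y) (fun y => u' τ y) x|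
                  ≤ 4*‖u τ‖*‖u' τ‖ := by
                rw [abs_mul, abs_two]
                have := G.abs_gammaBil_le (f := fun y => u τ y) (g := fun y => u' τ y)
                  (coe_bdd (u τ)) (coe_bdd (u' τ)) x
                linarith
              have h2 := le_abs_self (2 * G.gammaBil (fun y => u τ y) (fun y => u' τ y) x)
              linarith⟩)
            hr
          refine (hmaster.mono (fun z hz => ?_)).frequently
          rw [slope_def_field]
          exact hz
      · -- bound at contact
        intro τ hτ hcontact0
        have hcontact : G.Gsup (u τ) = c' + δ * Real.exp τ := hcontact0
        have h1 : G.Gsup (u τ) ≤ α/2 := by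
          rw [hcontact]
          have h2 : Real.exp τ ≤ Real.exp t := Real.exp_le_exp.2 (le_of_lt hτ.2)
          have h3 : δ * Real.exp τ ≤ δ₀ * Real.exp t :=
            mul_le_mul hδle h2 (Real.exp_pos _).le hδ₀pos.le
          have h4 : δ₀ * Real.exp t = α/2 - c' := by
            rw [hδ₀, mul_assoc, ← Real.exp_add]
            simp
          linarith
        show (if G.Gsup (u τ) ≤ α/2 then (0:ℝ) else 4*‖u τ‖*‖u' τ‖ + 1) < δ * Real.exp τ
        rw [if_pos h1]
        exact mul_pos hδ (Real.exp_pos τ)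
    have hFt : G.Gsup (u t) ≤ c' := by
      by_contra hcon
      push_neg at hcon
      set δ : ℝ := min δ₀ ((G.Gsup (u t) - c')/(2 * Real.exp t)) with hδdef
      have hδpos : 0 < δ := lt_min hδ₀pos (div_pos (by linarith) (by positivity))
      have h2 := main δ hδpos (min_le_left _ _)
      have h3 : δ * Real.exp t ≤ (G.Gsup (u t) - c')/2 := by
        have h4 : δ ≤ (G.Gsup (u t) - c')/(2*Real.exp t) := min_le_right _ _
        have h5 : (0:ℝ) < Real.exp t := Real.exp_pos _
        calc δ * Real.exp t ≤ ((G.Gsup (u t) - c')/(2*Real.exp t)) * Real.exp t :=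
              mul_le_mul_of_nonneg_right h4 h5.le
          _ = (G.Gsup (u t) - c')/2 := by
              rw [div_mul_eq_mul_div, div_eq_div_iff (by positivity) (by norm_num)]
              ring
      linarith
    intro x
    have h5 := G.gamma_le_Gsup (u t) x
    linarith

end WeightedGraph

namespace WeightedGraph

open Filter Topology Set Asymptotics

variable {V : Type*} [Nonempty V] (G : WeightedGraph V) {α : ℝ} {n : ℕ}
  {u₀ : Linf V} {u u' : ℝ → Linf V}

lemma W_bddAbove (v : Linf V) :
    BddAbove (Set.range (fun x : V => -G.lap (fun y => v y) x)) :=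
  bdd_of_le (c := 2 * ‖v‖) (fun x => by
    have := (abs_le.1 (G.abs_lap_le (coe_bdd v) x)).1
    linarith)

lemma W_le_Wsup (v : Linf V) (x : V) : -G.lap (fun y => v y) x ≤ G.Wsup v :=
  le_ciSup (G.W_bddAbove v) x

set_option maxHeartbeats 1000000 in
lemma W_bound (hu : IsMHESolution G u u' u₀) (hbg : G.BoundedGeometry α)
    (hCD : G.CD 0 n) (hn : 0 < n)
    (hMg : ∀ t : ℝ, 0 ≤ t → ∀ x : V, G.gamma (fun y => u t y) x ≤ α / 2) :
    ∀ t : ℝ, 0 < t → G.Wsup (u t) ≤ (n : ℝ) / (2 * t) := by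
  intro t ht
  have hnR : (0:ℝ) < (n:ℝ) := by exact_mod_cast hn
  obtain ⟨C₀, hC₀⟩ := (isCompact_Icc (a := (0:ℝ)) (b := t)).exists_bound_of_continuousOn
    (hu.cont.mono (fun τ hτ => hτ.1))
  have hC₀0 : 0 ≤ C₀ := le_trans (norm_nonneg (u 0)) (hC₀ 0 ⟨le_rfl, ht.le⟩)
  set C : ℝ := 2*C₀ + 1 with hCdef
  have hC : 0 < C := by rw [hCdef]; linarith
  set s : ℝ := min (t/2) ((n:ℝ)/(2*C)) with hsdef
  have hspos : 0 < s := lt_min (by linarith) (by positivity)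
  have hst : s < t := lt_of_le_of_lt (min_le_left _ _) (by linarith)
  have hsn : s ≤ (n:ℝ)/(2*C) := min_le_right _ _
  have hD : ∀ τ, τ ∈ Icc s t → 0 < 2*(τ-s)+(n:ℝ)/C := by
    intro τ hτ
    have h1 : 0 < (n:ℝ)/C := by positivity
    have := hτ.1
    linarith
  have hWcont : ContinuousOn (fun τ => G.Wsup (u τ)) (Ici 0) :=
    (G.Wsup_continuous).comp_continuousOn hu.cont
  have main : ∀ δ : ℝ, 0 < δ →
      G.Wsup (u t) ≤ (n:ℝ)/(2*(t-s)+(n:ℝ)/C) + δ * Real.exp t := by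
    intro δ hδ
    have hres := image_le_of_liminf_slope_right_lt_deriv_boundary'
      (f := fun τ => G.Wsup (u τ))
      (f' := fun τ => -(2/(n:ℝ))*(max (G.Wsup (u τ)) 0)^2)
      (a := s) (b := t)
      (B := fun τ => (n:ℝ)/(2*(τ-s)+(n:ℝ)/C) + δ * Real.exp τ)
      (B' := fun τ => -(2/(n:ℝ))*((n:ℝ)/(2*(τ-s)+(n:ℝ)/C))^2 + δ * Real.exp τ)
      (hWcont.mono (fun τ hτ => le_trans hspos.le hτ.1))
      ?_
      (by
        show G.Wsup (u s) ≤ (n:ℝ)/(2*(s-s)+(n:ℝ)/C) + δ * Real.exp s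
        have h1 : (n:ℝ)/(2*(s-s)+(n:ℝ)/C) = C := by
          rw [sub_self, mul_zero, zero_add]
          rw [div_div_eq_mul_div, mul_comm, mul_div_assoc, div_self (ne_of_gt hnR), mul_one]
        rw [h1]
        have h2 : G.Wsup (u s) ≤ 2*C₀ := by
          apply ciSup_le
          intro x
          have h3 := (abs_le.1 (G.abs_lap_le (coe_bdd (u s)) x)).1
          have h4 := hC₀ s ⟨hspos.le, hst.le⟩
          linarith
        have h5 : 0 < δ * Real.exp s := mul_pos hδ (Real.exp_pos _)
        rw [hCdef]
        linarith)
      ?_ ?_ ?_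
    · exact hres (right_mem_Icc.2 hst.le)
    · -- hf' : slope estimate
      intro τ hτ r hr0
      have hr : -(2/(n:ℝ))*(max (G.Wsup (u τ)) 0)^2 < r := hr0
      have hτ0 : 0 < τ := lt_of_lt_of_le hspos hτ.1
      have hMgτ : ∀ x : V, G.gamma (fun y => u τ y) x ≤ α/2 := hMg τ hτ0.le
      have hCd : ∀ x : V, |-G.lap (fun y => u' τ y) x| ≤ 2 * ‖u' τ‖ := by
        intro x
        rw [abs_neg]
        exact G.abs_lap_le (coe_bdd (u' τ)) x
      have hmaster := slope_master
        (g := fun z x => -G.lap (fun y => u z y) x)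
        (gd := fun x => -G.lap (fun y => u' τ y) x)
        (t := τ) (L := -(2/(n:ℝ))*(max (G.Wsup (u τ)) 0)^2) (r := r) (Cd := 2 * ‖u' τ‖)
        hCd
        (fun η hη => G.W_exp hu hτ0 hη)
        (fun z => G.W_bddAbove (u z))
        (fun s' hs' => by
          by_cases hM : 0 < G.Wsup (u τ)
          · have hmax : max (G.Wsup (u τ)) 0 = G.Wsup (u τ) := max_eq_left hM.le
            rw [hmax] at hs'
            set M : ℝ := G.Wsup (u τ) with hMdef
            set ε : ℝ := min M ((s' + (2/(n:ℝ))*M^2)/(4*M/(n:ℝ) + 2)) with hεdef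
            have hd4 : 0 < 4*M/(n:ℝ) + 2 := by
              have h41 : 0 < 4*M/(n:ℝ) := div_pos (by linarith) hnR
              linarith
            have hεpos : 0 < ε := lt_min hM (div_pos (by linarith) hd4)
            refine ⟨ε, hεpos, fun x hnear => ?_⟩
            show -G.lap (fun y => u' τ y) x ≤ s'
            have hder := G.W_deriv_nearmax hu hbg hCD hn hτ0 hMgτ hεpos.le hnear
            have hsup : M ≤ -G.lap (fun y => u τ y) x + ε := ciSup_le hnear
            have hεM : ε ≤ M := min_le_left _ _
            have hsq : (M - ε)^2 ≤ (G.lap (fun y => u τ y) x)^2 := by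
              have h1 : 0 ≤ M - ε := by linarith
              have h2 : (G.lap (fun y => u τ y) x)^2
                  = (-G.lap (fun y => u τ y) x)^2 := by ring
              rw [h2]
              exact pow_le_pow_left₀ h1 (by linarith) 2
            have h3 : -(2/(n:ℝ)) * (G.lap (fun y => u τ y) x)^2
                ≤ -(2/(n:ℝ))*(M-ε)^2 := by
              have h5 : 0 < 2/(n:ℝ) := by positivity
              nlinarith
            have hεle : ε ≤ (s' + (2/(n:ℝ))*M^2)/(4*M/(n:ℝ) + 2) := min_le_right _ _
            have hεle2 : ε * (4*M/(n:ℝ) + 2) ≤ s' + (2/(n:ℝ))*M^2 :=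
              (le_div_iff₀ hd4).1 hεle
            have h6 : 0 ≤ (2/(n:ℝ))*ε^2 := by positivity
            have hexp2 : 2*ε - (2/(n:ℝ))*(M-ε)^2
                = (2*ε + ε*(4*M/(n:ℝ))) - (2/(n:ℝ))*M^2 - (2/(n:ℝ))*ε^2 := by ring
            have hεle3 : ε*(4*M/(n:ℝ)) + ε*2 ≤ s' + (2/(n:ℝ))*M^2 := by
              have h7 := hεle2
              rw [mul_add] at h7
              linarith
            have h4 : 2*ε - (2/(n:ℝ))*(M-ε)^2 ≤ s' := by
              rw [hexp2]; linarith
            linarith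
          · have hmax : max (G.Wsup (u τ)) 0 = 0 := max_eq_right (not_lt.1 hM)
            rw [hmax] at hs'
            have hs'' : 0 < s' := by nlinarith
            refine ⟨s'/2, by linarith, fun x hnear => ?_⟩
            show -G.lap (fun y => u' τ y) x ≤ s'
            have hder := G.W_deriv_nearmax hu hbg hCD hn hτ0 hMgτ
              (by linarith : (0:ℝ) ≤ s'/2) hnear
            have h6 : 0 ≤ (2/(n:ℝ)) * (G.lap (fun y => u τ y) x)^2 := by positivity
            linarith)
        hr
      refine (hmaster.mono (fun z hz => ?_)).frequently
      rw [slope_def_field]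
      exact hz
    · -- hB continuity
      have hcont1 : Continuous (fun τ : ℝ => 2*(τ-s)+(n:ℝ)/C) :=
        (continuous_const.mul (continuous_id.sub continuous_const)).add continuous_const
      have hφcont : ContinuousOn (fun τ => (n:ℝ)/(2*(τ-s)+(n:ℝ)/C)) (Icc s t) :=
        ContinuousOn.div continuousOn_const hcont1.continuousOn
          (fun τ hτ => ne_of_gt (hD τ hτ))
      exact hφcont.add (continuous_const.mul Real.continuous_exp).continuousOn
    · -- hB' derivative
      intro τ hτ
      have hDτ : 0 < 2*(τ-s)+(n:ℝ)/C := hD τ ⟨hτ.1, hτ.2.le⟩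
      have h1 : HasDerivAt (fun τ : ℝ => 2*(τ-s)+(n:ℝ)/C) 2 τ := by
        have h0 := (((hasDerivAt_id τ).sub_const s).const_mul 2).add_const ((n:ℝ)/C)
        simpa using h0
      have h2 := (hasDerivAt_const τ (n:ℝ)).div h1 (ne_of_gt hDτ)
      have h3 : ∀ D : ℝ, D ≠ 0 → (0*D - (n:ℝ)*2)/D^2 = -(2/(n:ℝ))*((n:ℝ)/D)^2 := by
        intro D hD0
        have hn0 : (n:ℝ) ≠ 0 := ne_of_gt hnR
        field_simp
        ring
      rw [h3 _ (ne_of_gt hDτ)] at h2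
      exact (h2.add ((Real.hasDerivAt_exp τ).const_mul δ)).hasDerivWithinAt
    · -- contact bound
      intro τ hτ hcontact0
      have hcontact : G.Wsup (u τ) = (n:ℝ)/(2*(τ-s)+(n:ℝ)/C) + δ*Real.exp τ := hcontact0
      have hφpos : 0 < (n:ℝ)/(2*(τ-s)+(n:ℝ)/C) := div_pos hnR (hD τ ⟨hτ.1, hτ.2.le⟩)
      have hq : 0 < δ * Real.exp τ := mul_pos hδ (Real.exp_pos _)
      have hFpos : 0 < G.Wsup (u τ) := by rw [hcontact]; linarith
      show -(2/(n:ℝ))*(max (G.Wsup (u τ)) 0)^2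
          < -(2/(n:ℝ))*((n:ℝ)/(2*(τ-s)+(n:ℝ)/C))^2 + δ * Real.exp τ
      rw [max_eq_left hFpos.le, hcontact]
      have h9 : 0 ≤ (2/(n:ℝ)) * (2*((n:ℝ)/(2*(τ-s)+(n:ℝ)/C))*(δ*Real.exp τ)
          + (δ*Real.exp τ)^2) := by positivity
      nlinarith
  -- remove δ
  have hFt : G.Wsup (u t) ≤ (n:ℝ)/(2*(t-s)+(n:ℝ)/C) := by
    by_contra hcon
    push_neg at hcon
    set X : ℝ := G.Wsup (u t) - (n:ℝ)/(2*(t-s)+(n:ℝ)/C) with hXdef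
    have hX : 0 < X := by rw [hXdef]; linarith
    set δ : ℝ := X/(2 * Real.exp t) with hδdef
    have hδpos : 0 < δ := div_pos hX (by positivity)
    have h2 := main δ hδpos
    have h3 : ∀ Y E : ℝ, E ≠ 0 → (Y/(2*E)) * E = Y/2 := by
      intro Y E hE
      field_simp
    rw [hδdef, h3 X (Real.exp t) (Real.exp_pos t).ne'] at h2
    have hX2 := hXdef
    linarith
  have hφle : (n:ℝ)/(2*(t-s)+(n:ℝ)/C) ≤ (n:ℝ)/(2*t) := by
    have h1 : 2*s ≤ (n:ℝ)/C := by
      have h2 : ∀ a b : ℝ, b ≠ 0 → 2*(a/(2*b)) = a/b := by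
        intro a b hb
        field_simp
      have h2' := h2 (n:ℝ) C (ne_of_gt hC)
      linarith [mul_le_mul_of_nonneg_left hsn (by norm_num : (0:ℝ) ≤ 2)]
    have h4 : 2*t ≤ 2*(t-s)+(n:ℝ)/C := by linarith
    exact div_le_div_of_nonneg_left hnR.le (by linarith) h4
  linarith

end WeightedGraph

/-- **Li–Yau inequality.** On a weighted graph with bounded geometry
(constant `α > 0`) satisfying `CD(0,n)`, if `u` solves the modified heat equation
with initial data `u₀ ∈ L^∞(V,μ)`, `‖Γ u₀‖_∞ < α/2`, then for all `t > 0` and `x`,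
`Γ(u t)(x) - ∂ₜ u(t)(x) = -Δ(u t)(x) ≤ n/(2t)`. -/
theorem li_yau_inequality {V : Type*} [Countable V]
    (G : WeightedGraph V) (α : ℝ) (n : ℕ) (hn : 0 < n)
    (hbg : G.BoundedGeometry α) (hCD : G.CD 0 n) (u₀ : Linf V)
    (h0 : supNorm (G.gamma (fun x => u₀ x)) < α / 2)
    (u u' : ℝ → Linf V) (hu : IsMHESolution G u u' u₀) :
    ∀ t : ℝ, 0 < t → ∀ x : V,
      G.gamma (fun y => u t y) x - u' t x = -(G.lap (fun y => u t y) x) ∧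
      -(G.lap (fun y => u t y) x) ≤ (n : ℝ) / (2 * t) := by
  intro t ht x
  haveI : Nonempty V := ⟨x⟩
  have heqn := hu.eqn t ht x
  refine ⟨by linarith, ?_⟩
  have ha : G.Gsup (u 0) < α / 2 := by
    have h1 : u 0 = u₀ := hu.init
    have h2 : G.Gsup (u 0) ≤ supNorm (G.gamma (fun x => u₀ x)) := by
      rw [h1]
      apply ciSup_le
      intro y
      have h3 : G.gamma (fun z => u₀ z) y ≤ |G.gamma (fun z => u₀ z) y| := le_abs_self _
      have h4 : |G.gamma (fun z => u₀ z) y| ≤ ⨆ x : V, |G.gamma (fun z => u₀ z) x| :=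
        le_ciSup (WeightedGraph.bdd_of_le (c := 2*‖u₀‖^2)
          (fun z => G.abs_gamma_le (WeightedGraph.coe_bdd u₀) z)) y
      exact le_trans h3 h4
    linarith
  have hMg := G.gamma_propagation hu hbg hCD ha
  have hW := G.W_bound hu hbg hCD hn hMg t ht
  have hx := G.W_le_Wsup (u t) x
  linarith
end

section
/- Let G=(V,p,μ) be a weighted graph. Then for every function f:V→ℝ and every x∈V, Γ₂f(x) = (1/4)·|D²f|²(x) − Γf(x) + (1/2)·(Δf(x))², where |D²f|²(x) = ∑_{y∼x} p(x,y) ∑_{z∼y} p(y,z)·(f(x)−2f(y)+f(z))². -/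
/-!
Both sides of the formula are finite combinations of the one-step averages
`∑' y, p x y * g y`, which are linear in `g` and fix constants because `p` is a finitely
supported Markov kernel. Expanding the second difference
`f x - 2 f y + f z = (f z - f y) - (f y - f x)` and averaging over `z ∼ y` gives
`2 Γf(y) - 2 (f y - f x) Δf(y) + (f y - f x)²`; averaging once more over `y ∼ x` and comparing
with `Γ₂ f(x) = ½ Δ(Γf)(x) - Γ(f, Δf)(x)` expanded in the same averages yields the formula.
-/

namespace WeightedGraph

variable {V : Type*} (G : WeightedGraph V)

/-- The squared norm of the discrete Hessian, `|D²f|²(x)`. -/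
noncomputable def hessianNormSq (f : V → ℝ) (x : V) : ℝ :=
  ∑' y, G.p x y * ∑' z, G.p y z * (f x - 2 * f y + f z) ^ 2

theorem summable_p_mul (x : V) (g : V → ℝ) : Summable fun y => G.p x y * g y :=
  summable_of_hasFiniteSupport <| (G.locallyFinite x).subset fun y hy =>
    (G.p_nonneg x y).lt_of_ne' (left_ne_zero_of_mul hy)

theorem lap_eq_tsum_sub (g : V → ℝ) (x : V) : G.lap g x = ∑' y, G.p x y * g y - g x := by
  have h := (G.summable_p_mul x g).hasSum.sub ((G.markov x).mul_right (g x))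
  rw [one_mul] at h
  exact (tsum_congr fun y => mul_sub _ _ _).trans h.tsum_eq

theorem gammaBil_eq (f g : V → ℝ) (x : V) :
    G.gammaBil f g x = (1 / 2) * (∑' y, G.p x y * ((f y - f x) * g y) - G.lap f x * g x) := by
  have h := (G.summable_p_mul x fun y => (f y - f x) * g y).hasSum.sub
    ((G.summable_p_mul x fun y => f y - f x).hasSum.mul_right (g x))
  rw [gammaBil, lap, ← h.tsum_eq]
  congr 1
  exact tsum_congr fun y => by ring

theorem tsum_p_mul_sq_second_difference (f : V → ℝ) (x y : V) :
    ∑' z, G.p y z * (f x - 2 * f y + f z) ^ 2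
      = 2 * G.gamma f y - 2 * (f y - f x) * G.lap f y + (f y - f x) ^ 2 := by
  have h := ((G.summable_p_mul y fun z => (f z - f y) ^ 2).hasSum.sub
    ((G.summable_p_mul y fun z => f z - f y).hasSum.mul_left (2 * (f y - f x)))).add
    ((G.markov y).mul_right ((f y - f x) ^ 2))
  rw [gamma, lap]
  convert h.tsum_eq using 1
  · exact tsum_congr fun z => by ring
  · ring

theorem hessianNormSq_eq (f : V → ℝ) (x : V) :
    G.hessianNormSq f x = 2 * ∑' y, G.p x y * G.gamma f y
      - 2 * ∑' y, G.p x y * ((f y - f x) * G.lap f y) + 2 * G.gamma f x := by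
  have h := (((G.summable_p_mul x (G.gamma f)).hasSum.mul_left 2).sub
    ((G.summable_p_mul x fun y => (f y - f x) * G.lap f y).hasSum.mul_left 2)).add
    (G.summable_p_mul x fun y => (f y - f x) ^ 2).hasSum
  rw [hessianNormSq, gamma]
  convert h.tsum_eq using 1
  · exact tsum_congr fun y => by rw [tsum_p_mul_sq_second_difference]; ring
  · ring

end WeightedGraph

theorem bochner_formula_general {V : Type*}
    (G : WeightedGraph V) (f : V → ℝ) (x : V) :
    G.gamma2 f x =
      (1 / 4) * (∑' y, G.p x y * ∑' z, G.p y z * (f x - 2 * f y + f z) ^ 2)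
        - G.gamma f x + (1 / 2) * (G.lap f x) ^ 2 := by
  change _ = 1 / 4 * G.hessianNormSq f x - _ + _
  rw [WeightedGraph.gamma2, G.lap_eq_tsum_sub (G.gamma f), G.gammaBil_eq, G.hessianNormSq_eq]
  ring

/-- **Bochner formula for weighted graphs.**
`Γ₂ f(x) = (1/4)|D²f|²(x) - Γf(x) + (1/2)(Δf(x))²` where
`|D²f|²(x) = ∑_{y∼x} p(x,y) ∑_{z∼y} p(y,z) (f(x) - 2f(y) + f(z))²`. -/
theorem bochner_formula {V : Type*} [Countable V]
    (G : WeightedGraph V) (f : V → ℝ) (x : V) :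
    G.gamma2 f x =
      (1 / 4) * (∑' y, G.p x y * ∑' z, G.p y z * (f x - 2 * f y + f z) ^ 2)
        - G.gamma f x + (1 / 2) * (G.lap f x) ^ 2 :=
  bochner_formula_general G f x
end

section
/- Every weighted graph G=(V,p,μ) satisfies CD(−1,2): for every function f:V→ℝ and every x∈V, Γ₂f(x) ≥ (1/2)·(Δf(x))² − Γf(x). -/
/-!
Writing `a = f z - f y` and `b = f y - f x` for a two-step path `x ∼ y ∼ z`, the
Markov property `∑_z p(y,z) = 1` turns `Γf(y) - b Δf(y) + b²/2` into the average of
`(a - b)²/2 = (f z - 2 f y + f x)²/2` over `z`. Averaging once more over `y` gives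
`Γ₂f(x) = (Δf(x))²/2 - Γf(x) + (1/2) ∑_y ∑_z p(x,y) p(y,z) (f z - 2 f y + f x)²/2`,
and the double sum of squares is nonnegative.
-/

open Finset

namespace WeightedGraph

variable {V : Type*} (G : WeightedGraph V)

noncomputable def neighbors (x : V) : Finset V := (G.locallyFinite x).toFinset

theorem mem_neighbors {x y : V} : y ∈ G.neighbors x ↔ 0 < G.p x y :=
  (G.locallyFinite x).mem_toFinset

theorem tsum_eq_sum_neighbors (x : V) {F : V → ℝ} (hF : ∀ y, G.p x y = 0 → F y = 0) :
    ∑' y, F y = ∑ y ∈ G.neighbors x, F y :=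
  tsum_eq_sum fun y hy => hF y <|
    ((G.p_nonneg x y).lt_or_eq.resolve_left fun h => hy (G.mem_neighbors.mpr h)).symm

theorem sum_neighbors_p (x : V) : ∑ y ∈ G.neighbors x, G.p x y = 1 := by
  rw [← G.tsum_eq_sum_neighbors _ fun y h => h]
  exact (G.markov x).tsum_eq

theorem sum_neighbors_p_mul_sub (x : V) (g : V → ℝ) (c : ℝ) :
    ∑ y ∈ G.neighbors x, G.p x y * (g y - c) = ∑ y ∈ G.neighbors x, G.p x y * g y - c := by
  simp only [mul_sub, sum_sub_distrib, ← sum_mul, sum_neighbors_p, one_mul]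

theorem lap_eq_sum (f : V → ℝ) (x : V) :
    G.lap f x = ∑ y ∈ G.neighbors x, G.p x y * (f y - f x) :=
  G.tsum_eq_sum_neighbors x fun y h => by simp [h]

theorem gamma_eq_sum (f : V → ℝ) (x : V) :
    G.gamma f x = (1 / 2) * ∑ y ∈ G.neighbors x, G.p x y * (f y - f x) ^ 2 := by
  rw [gamma, G.tsum_eq_sum_neighbors x fun y h => by simp [h]]

theorem gammaBil_eq_sum (f g : V → ℝ) (x : V) :
    G.gammaBil f g x = (1 / 2) * ∑ y ∈ G.neighbors x, G.p x y * (f y - f x) * (g y - g x) := by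
  rw [gammaBil, G.tsum_eq_sum_neighbors x fun y h => by simp [h]]

theorem gamma_sub_mul_lap_add_sq_eq_sum (f : V → ℝ) (y : V) (c : ℝ) :
    G.gamma f y - (f y - c) * G.lap f y + (f y - c) ^ 2 / 2
      = ∑ z ∈ G.neighbors y, G.p y z * ((f z - 2 * f y + c) ^ 2 / 2) := by
  calc G.gamma f y - (f y - c) * G.lap f y + (f y - c) ^ 2 / 2
      = (1 / 2) * ∑ z ∈ G.neighbors y, G.p y z * (f z - f y) ^ 2
          - (f y - c) * ∑ z ∈ G.neighbors y, G.p y z * (f z - f y)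
          + (f y - c) ^ 2 / 2 * ∑ z ∈ G.neighbors y, G.p y z := by
        rw [gamma_eq_sum, lap_eq_sum, sum_neighbors_p, mul_one]
    _ = _ := by
        simp only [mul_sum, ← sum_sub_distrib, ← sum_add_distrib]
        exact sum_congr rfl fun z _ => by ring

theorem gamma2_eq_sum (f : V → ℝ) (x : V) :
    G.gamma2 f x = G.lap f x ^ 2 / 2 - G.gamma f x
      + (1 / 2) * ∑ y ∈ G.neighbors x,
          G.p x y * ∑ z ∈ G.neighbors y, G.p y z * ((f z - 2 * f y + f x) ^ 2 / 2) := by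
  simp only [← gamma_sub_mul_lap_add_sq_eq_sum]
  have hΓ : G.lap (G.gamma f) x = ∑ y ∈ G.neighbors x, G.p x y * G.gamma f y - G.gamma f x := by
    rw [lap_eq_sum, sum_neighbors_p_mul_sub]
  have hB : G.gammaBil f (G.lap f) x = (1 / 2) *
      (∑ y ∈ G.neighbors x, G.p x y * ((f y - f x) * G.lap f y) - G.lap f x ^ 2) := by
    have hsum : ∑ y ∈ G.neighbors x, G.p x y * (f y - f x) * (G.lap f y - G.lap f x)
        = ∑ y ∈ G.neighbors x, G.p x y * ((f y - f x) * G.lap f y)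
          - (∑ y ∈ G.neighbors x, G.p x y * (f y - f x)) * G.lap f x := by
      rw [sum_mul, ← sum_sub_distrib]
      exact sum_congr rfl fun y _ => by ring
    rw [gammaBil_eq_sum, hsum, ← lap_eq_sum, sq]
  have hsplit : ∑ y ∈ G.neighbors x, G.p x y *
      (G.gamma f y - (f y - f x) * G.lap f y + (f y - f x) ^ 2 / 2)
      = ∑ y ∈ G.neighbors x, G.p x y * G.gamma f y
        - ∑ y ∈ G.neighbors x, G.p x y * ((f y - f x) * G.lap f y) + G.gamma f x := by
    rw [gamma_eq_sum, mul_sum, ← sum_sub_distrib, ← sum_add_distrib]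
    exact sum_congr rfl fun y _ => by ring
  rw [gamma2, hΓ, hB, hsplit]
  ring

end WeightedGraph

theorem CD_neg_one_two_general {V : Type*} (G : WeightedGraph V) :
    ∀ f : V → ℝ, ∀ x : V,
      (1 / 2) * (G.lap f x) ^ 2 + (-1) * G.gamma f x ≤ G.gamma2 f x := by
  intro f x
  have hsq : 0 ≤ ∑ y ∈ G.neighbors x,
      G.p x y * ∑ z ∈ G.neighbors y, G.p y z * ((f z - 2 * f y + f x) ^ 2 / 2) :=
    sum_nonneg fun y _ => mul_nonneg (G.p_nonneg x y) <|
      sum_nonneg fun z _ => mul_nonneg (G.p_nonneg y z) (by positivity)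
  rw [G.gamma2_eq_sum]
  linarith

/-- Every weighted graph satisfies `CD(-1, 2)`:
`Γ₂ f(x) ≥ (1/2)(Δf(x))² - Γf(x)` for all `f` and `x`. -/
theorem CD_neg_one_two {V : Type*} [Countable V] (G : WeightedGraph V) :
    ∀ f : V → ℝ, ∀ x : V,
      (1 / 2) * (G.lap f x) ^ 2 + (-1) * G.gamma f x ≤ G.gamma2 f x :=
  CD_neg_one_two_general G
end
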